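/- Let 0 < N_1 < N_2 < ⋯ be natural numbers with limsup_{k→∞} N_k / N_{k+1} < 1, and let β_k ∈ 𝔻 with β_k → 0 as k → ∞. Let μ be a nontrivial probability measure on the unit circle whose Verblunsky coefficients form the associated sparse sequence, i.e., α_j = β_k if j = N_k − 1 for some k ≥ 1 and α_j = 0 otherwise. Then μ has normal L²-derivative behavior. -/

import Mathlib

open MeasureTheory Polynomial Filter Topology ComplexConjugate

noncomputable section

/-- The reversed (Szegő `*`-transformed) polynomial of a degree-`n` polynomial:
`P*(z) = z^n conj(P(1/conj z))`, i.e. the coefficients are conjugated and reversed. -/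
def starPoly (n : ℕ) (P : Polynomial ℂ) : Polynomial ℂ :=
  (P.map (starRingEnd ℂ)).reflect n

/-- The `L²(dμ)` norm of a polynomial. -/
def l2norm (μ : Measure ℂ) (P : Polynomial ℂ) : ℝ :=
  (∫ z, ‖P.eval z‖ ^ 2 ∂μ) ^ (1 / 2 : ℝ)

/-- `φ` is the sequence of orthonormal polynomials for the measure `μ`:
`φ n` has degree `n`, a positive (real) leading coefficient, and the family
is orthonormal in `L²(dμ)`. -/
structure IsOPUC (μ : Measure ℂ) (φ : ℕ → Polynomial ℂ) : Prop where
  deg : ∀ n : ℕ, (φ n).degree = n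
  lead_re_pos : ∀ n : ℕ, 0 < ((φ n).leadingCoeff).re
  lead_im_zero : ∀ n : ℕ, ((φ n).leadingCoeff).im = 0
  orth : ∀ m n : ℕ,
    ∫ z, conj ((φ m).eval z) * (φ n).eval z ∂μ = if m = n then 1 else 0

/-- The monic orthogonal polynomials `Φ_n` associated to the orthonormal ones. -/
def monicOP (φ : ℕ → Polynomial ℂ) (n : ℕ) : Polynomial ℂ :=
  Polynomial.C ((φ n).leadingCoeff)⁻¹ * φ n

/-- The Verblunsky coefficients `α_n = -conj (Φ_{n+1}(0))`. -/
def verblunsky (φ : ℕ → Polynomial ℂ) (n : ℕ) : ℂ :=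
  -conj ((monicOP φ (n + 1)).eval 0)

/-- The measure lives on the unit circle `∂𝔻`. -/
def OnCircle (μ : Measure ℂ) : Prop := μ (Metric.sphere (0 : ℂ) 1)ᶜ = 0

/-- The measure is nontrivial: it is not supported on any finite set
(equivalently, its support is infinite). -/
def NontrivialSupport (μ : Measure ℂ) : Prop :=
  ∀ s : Finset ℂ, μ ((↑s : Set ℂ))ᶜ ≠ 0

/-- `μ` has normal `L²`-derivative behavior: `‖φ_n'‖_{L²(dμ)} / n → 1`. -/
def NormalBehavior (μ : Measure ℂ) (φ : ℕ → Polynomial ℂ) : Prop :=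
  Tendsto (fun n : ℕ => l2norm μ (derivative (φ n)) / n) atTop (𝓝 1)

/-!
Write `Fₙ = ‖φₙ'‖` and `Gₙ = ‖(φₙ*)'‖` in `L²(μ)`, and `κₙ` for the leading coefficient of `φₙ`.
Differentiating the Szegő recursion `ρₙ φₙ₊₁ = z φₙ - ᾱₙ φₙ*`, `ρₙ φₙ₊₁* = φₙ* - αₙ z φₙ`
(`ρₙ = κₙ / κₙ₊₁ = √(1 - |αₙ|²)`) and using `‖φₙ‖ = ‖φₙ*‖ = 1` gives, for the excess
`Hₙ = Fₙ - n + Gₙ`, the bound `Hₙ₊₁ ≤ γₙ Hₙ + (γₙ - 1)(n + 1)` with `γₙ = (1 + |αₙ|) / ρₙ`.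
Moreover `Fₙ ≥ n`, so `Hₙ ≥ 0` and `0 ≤ Fₙ / n - 1 ≤ Hₙ / n`.
For sparse coefficients `γₙ = 1` off the jumps, so `H` is non-increasing between consecutive `N_k`,
and `h_k = H(N_k) / N_k` satisfies `h_{k+1} ≤ γ (N_k / N_{k+1}) h_k + (γ - 1)` with
`γ = γ_{N_{k+1} - 1} → 1`. Since `limsup N_k / N_{k+1} < 1` this is eventually a contraction with a
vanishing error, so `h_k → 0`, and then `Hₙ / n → 0`.
-/

section StarPoly

theorem coeff_zero_starPoly (n : ℕ) (P : ℂ[X]) : (starPoly n P).coeff 0 = conj (P.coeff n) := by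
  simp [starPoly, coeff_reflect]

theorem natDegree_starPoly_le {n : ℕ} {P : ℂ[X]} (hP : P.natDegree ≤ n) :
    (starPoly n P).natDegree ≤ n :=
  natDegree_reflect_le.trans (max_le le_rfl ((natDegree_map_le).trans hP))

theorem starPoly_C_mul (n : ℕ) (c : ℂ) (P : ℂ[X]) :
    starPoly n (C c * P) = C (conj c) * starPoly n P := by
  rw [starPoly, Polynomial.map_mul, map_C, reflect_C_mul]
  rfl

theorem starPoly_sub (n : ℕ) (P Q : ℂ[X]) :
    starPoly n (P - Q) = starPoly n P - starPoly n Q := by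
  rw [starPoly, Polynomial.map_sub, reflect_sub]
  rfl

theorem starPoly_X_mul {n : ℕ} {P : ℂ[X]} (hP : P.natDegree ≤ n) :
    starPoly (n + 1) (X * P) = starPoly n P := by
  rw [starPoly, Polynomial.map_mul, map_X, add_comm,
    reflect_mul _ _ natDegree_X_le ((natDegree_map_le).trans hP), reflect_one_X, one_mul]
  rfl

theorem starPoly_starPoly {n : ℕ} {P : ℂ[X]} (hP : P.natDegree ≤ n) :
    starPoly (n + 1) (starPoly n P) = X * P := by
  have hconj : ((P.map (starRingEnd ℂ)).map (starRingEnd ℂ)) = P := by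
    rw [Polynomial.map_map, RingHomCompTriple.comp_eq, Polynomial.map_id]
  rw [starPoly, starPoly, ← reflect_map, hconj, ← mul_one (P.reflect n),
    reflect_mul _ _ (natDegree_reflect_le.trans (max_le le_rfl hP)) (by simp),
    reflect_reflect, reflect_one, pow_one, mul_comm]

theorem eval_starPoly {n : ℕ} {P : ℂ[X]} (hP : P.natDegree ≤ n) {z : ℂ} (hz : ‖z‖ = 1) :
    (starPoly n P).eval z = z ^ n * conj (P.eval z) := by
  have hzz : z * conj z = 1 := by rw [RCLike.mul_conj, hz]; norm_num
  let : Invertible (conj z) := ⟨z, hzz, by rw [mul_comm, hzz]⟩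
  have h : (starPoly n P).eval z * conj z ^ n = (P.map (starRingEnd ℂ)).eval (conj z) :=
    eval₂_reflect_mul_pow (RingHom.id ℂ) (conj z) n _ ((natDegree_map_le).trans hP)
  have hpow : (z * conj z) ^ n = 1 := by rw [hzz, one_pow]
  rw [eval_map_apply] at h
  linear_combination z ^ n * h - (starPoly n P).eval z * hpow

theorem norm_eval_starPoly {n : ℕ} {P : ℂ[X]} (hP : P.natDegree ≤ n) {z : ℂ} (hz : ‖z‖ = 1) :
    ‖(starPoly n P).eval z‖ = ‖P.eval z‖ := by
  rw [eval_starPoly hP hz, norm_mul, norm_pow, hz, one_pow, one_mul, RCLike.norm_conj]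

end StarPoly

section SparseRecursion

theorem le_pow_mul_add_of_le_mul_add {g : ℕ → ℝ} {Q b : ℝ} (hQ : 0 ≤ Q)
    (h : ∀ m, g (m + 1) ≤ Q * g m + (1 - Q) * b) (m : ℕ) : g m ≤ Q ^ m * (g 0 - b) + b := by
  induction m with
  | zero => simp
  | succ m ih =>
    calc g (m + 1) ≤ Q * g m + (1 - Q) * b := h m
      _ ≤ Q * (Q ^ m * (g 0 - b) + b) + (1 - Q) * b := by gcongr
      _ = Q ^ (m + 1) * (g 0 - b) + b := by ring

theorem tendsto_zero_of_le_mul_add {g q c : ℕ → ℝ} {Q : ℝ} (hg : ∀ k, 0 ≤ g k) (hQ0 : 0 ≤ Q)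
    (hQ1 : Q < 1) (hq : ∀ᶠ k in atTop, q k ≤ Q) (hc : Tendsto c atTop (𝓝 0))
    (hrec : ∀ k, g (k + 1) ≤ q k * g k + c k) : Tendsto g atTop (𝓝 0) := by
  refine tendsto_order.2 ⟨fun a ha => Eventually.of_forall fun k => ha.trans_le (hg k),
    fun ε hε => ?_⟩
  have hδ : 0 < (1 - Q) * (ε / 2) := mul_pos (by linarith) (half_pos hε)
  obtain ⟨K, hK⟩ := eventually_atTop.1 (hq.and (hc.eventually (gt_mem_nhds hδ)))
  have hstep : ∀ m, g (m + 1 + K) ≤ Q * g (m + K) + (1 - Q) * (ε / 2) := fun m => by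
    obtain ⟨hqm, hcm⟩ := hK (m + K) (Nat.le_add_left K m)
    calc g (m + 1 + K) = g (m + K + 1) := by rw [add_right_comm]
      _ ≤ q (m + K) * g (m + K) + c (m + K) := hrec _
      _ ≤ Q * g (m + K) + (1 - Q) * (ε / 2) := by gcongr; exact hg _
  have hbound : ∀ m, g (m + K) ≤ Q ^ m * (g K - ε / 2) + ε / 2 := fun m => by
    simpa using le_pow_mul_add_of_le_mul_add (g := fun m => g (m + K)) hQ0 hstep m
  have hpow : Tendsto (fun m => Q ^ m * (g K - ε / 2) + ε / 2) atTop (𝓝 (ε / 2)) := by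
    simpa using ((tendsto_pow_atTop_nhds_zero_of_lt_one hQ0 hQ1).mul_const _).add_const (ε / 2)
  rw [← map_add_atTop_eq_nat K, eventually_map]
  filter_upwards [hpow.eventually (gt_mem_nhds (half_lt_self hε))] with m hm
  exact (hbound m).trans_lt hm

variable {N : ℕ → ℕ} (hN0 : 0 < N 0) (hN : StrictMono N) {H : ℕ → ℝ}
include hN0 hN

theorem apply_le_of_sparse_block (hflat : ∀ n, (∀ k, n ≠ N k - 1) → H (n + 1) ≤ H n)
    {k n : ℕ} (hkn : N k ≤ n) (hnk : n < N (k + 1)) : H n ≤ H (N k) := by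
  induction n, hkn using Nat.le_induction with
  | base => exact le_rfl
  | succ n hkn ih =>
    refine (hflat n fun i hi => ?_).trans (ih (by omega))
    have hNi : N i = n + 1 := by have := hN0.trans_le (hN.monotone i.zero_le); omega
    have hki : k < i := hN.lt_iff_lt.1 (by omega)
    have hik : i < k + 1 := hN.lt_iff_lt.1 (by omega)
    omega

theorem tendsto_apply_div_of_sparse_jumps
    (hratio : limsup (fun k => (N k : ℝ) / N (k + 1)) atTop < 1) {Γ : ℕ → ℝ}
    (hH : ∀ n, 0 ≤ H n) (hΓ0 : ∀ k, 0 ≤ Γ k) (hΓ : Tendsto Γ atTop (𝓝 1))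
    (hflat : ∀ n, (∀ k, n ≠ N k - 1) → H (n + 1) ≤ H n)
    (hjump : ∀ k, H (N k) ≤ Γ k * H (N k - 1) + (Γ k - 1) * N k) :
    Tendsto (fun k => H (N k) / N k) atTop (𝓝 0) := by
  have hNpos : ∀ k, (0 : ℝ) < N k := fun k => by
    exact_mod_cast hN0.trans_le (hN.monotone k.zero_le)
  have hratio_le : ∀ k, (N k : ℝ) / N (k + 1) ≤ 1 := fun k =>
    div_le_one_of_le₀ (by exact_mod_cast (hN (Nat.lt_add_one k)).le) (Nat.cast_nonneg _)
  obtain ⟨θ, hθ, hθ1⟩ := exists_between (max_lt hratio one_pos)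
  have hθ0 : 0 < θ := (le_max_right _ _).trans_lt hθ
  have hΓ' := hΓ.comp (tendsto_add_atTop_nat 1)
  refine tendsto_zero_of_le_mul_add (q := fun k => Γ (k + 1) * (N k / N (k + 1)))
    (Q := (1 + θ) / 2) (fun k => div_nonneg (hH _) (hNpos k).le) (by linarith) (by linarith) ?_
    (by simpa using hΓ'.sub_const 1) fun k => ?_
  · have hr : ∀ᶠ k in atTop, (N k : ℝ) / N (k + 1) < θ :=
      eventually_lt_of_limsup_lt ((le_max_left _ _).trans_lt hθ)
        (isBoundedUnder_of ⟨1, hratio_le⟩)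
    filter_upwards [hr, hΓ'.eventually (ge_mem_nhds (by linarith : 1 < 1 + (1 - θ) / 2))]
      with k hrk hΓk
    calc Γ (k + 1) * (N k / N (k + 1)) ≤ (1 + (1 - θ) / 2) * θ :=
          mul_le_mul hΓk hrk.le (div_nonneg (hNpos k).le (hNpos _).le) (by linarith)
      _ ≤ (1 + θ) / 2 := by nlinarith
  · have hblock : H (N (k + 1) - 1) ≤ H (N k) :=
      apply_le_of_sparse_block hN0 hN hflat (by have := hN (Nat.lt_add_one k); omega)
        (by have := hN0.trans_le (hN.monotone (k + 1).zero_le); omega)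
    have hnum : H (N (k + 1)) ≤ Γ (k + 1) * H (N k) + (Γ (k + 1) - 1) * N (k + 1) :=
      (hjump (k + 1)).trans (by gcongr; exact hΓ0 _)
    calc H (N (k + 1)) / N (k + 1)
        ≤ (Γ (k + 1) * H (N k) + (Γ (k + 1) - 1) * N (k + 1)) / N (k + 1) := by gcongr
      _ = Γ (k + 1) * (N k / N (k + 1)) * (H (N k) / N k) + (Γ (k + 1) - 1) := by
        field_simp [(hNpos k).ne', (hNpos (k + 1)).ne']

theorem tendsto_div_of_sparse_growth
    (hratio : limsup (fun k => (N k : ℝ) / N (k + 1)) atTop < 1) {γ : ℕ → ℝ}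
    (hH : ∀ n, 0 ≤ H n) (hγ0 : ∀ n, 0 ≤ γ n) (hγ1 : ∀ n, (∀ k, n ≠ N k - 1) → γ n = 1)
    (hγ : Tendsto (fun k => γ (N k - 1)) atTop (𝓝 1))
    (hstep : ∀ n : ℕ, H (n + 1) ≤ γ n * H n + (γ n - 1) * (n + 1)) :
    Tendsto (fun n => H n / n) atTop (𝓝 0) := by
  have hflat : ∀ n, (∀ k, n ≠ N k - 1) → H (n + 1) ≤ H n := fun n hn => by
    simpa [hγ1 n hn] using hstep n
  have hjump : ∀ k, H (N k) ≤ γ (N k - 1) * H (N k - 1) + (γ (N k - 1) - 1) * N k := fun k => by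
    have hNk : N k - 1 + 1 = N k := Nat.sub_add_cancel (hN0.trans_le (hN.monotone k.zero_le))
    simpa [hNk, ← Nat.cast_add_one] using hstep (N k - 1)
  have hsub := tendsto_apply_div_of_sparse_jumps hN0 hN hratio hH (fun k => hγ0 _) hγ hflat hjump
  refine tendsto_order.2 ⟨fun a ha => Eventually.of_forall fun n =>
    ha.trans_le (div_nonneg (hH n) n.cast_nonneg), fun ε hε => ?_⟩
  obtain ⟨K, hK⟩ := eventually_atTop.1 (hsub.eventually (gt_mem_nhds hε))
  refine eventually_atTop.2 ⟨N K, fun n hn => ?_⟩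
  obtain ⟨k, hkn, hnk⟩ := hN.exists_between_of_tendsto_atTop hN.tendsto_atTop
    (x := n + 1) (by have := hN.monotone K.zero_le; omega)
  have hKk : K ≤ k := by
    by_contra! h
    have : N (k + 1) ≤ N K := hN.monotone h
    omega
  have hNk : (0 : ℝ) < N k := by exact_mod_cast hN0.trans_le (hN.monotone k.zero_le)
  calc H n / n ≤ H (N k) / N k :=
        div_le_div₀ (hH _) (apply_le_of_sparse_block hN0 hN hflat (by omega) (by omega)) hNk
          (by exact_mod_cast (by omega : N k ≤ n))
    _ < ε := hK k hKk

end SparseRecursion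

open scoped InnerProductSpace

theorem l2norm_nonneg (μ : Measure ℂ) (P : ℂ[X]) : 0 ≤ l2norm μ P :=
  Real.rpow_nonneg (integral_nonneg fun _ => by positivity) _

namespace OnCircle

variable {μ : Measure ℂ} (hcirc : OnCircle μ)
include hcirc

theorem ae_norm_eq_one : ∀ᵐ z ∂μ, ‖z‖ = 1 := by
  rw [ae_iff]
  simpa [OnCircle, Set.compl_def] using hcirc

theorem memLp_eval [IsFiniteMeasure μ] (P : ℂ[X]) : MemLp (fun z => P.eval z) 2 μ := by
  obtain ⟨C, hC⟩ := (isCompact_sphere (0 : ℂ) 1).exists_bound_of_continuousOn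
    P.continuous.continuousOn
  refine MemLp.of_bound P.continuous.aestronglyMeasurable C ?_
  filter_upwards [hcirc.ae_norm_eq_one] with z hz
  exact hC z (by simpa using hz)

variable [IsFiniteMeasure μ]

def toL2 : ℂ[X] →ₗ[ℂ] Lp ℂ 2 μ where
  toFun P := (hcirc.memLp_eval P).toLp _
  map_add' P Q := by
    simp_rw [eval_add]
    exact MemLp.toLp_add _ _
  map_smul' c P := by
    simp_rw [eval_smul, smul_eq_mul]
    exact MemLp.toLp_const_smul c _

theorem toL2_ae_eq (P : ℂ[X]) : hcirc.toL2 P =ᵐ[μ] fun z => P.eval z :=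
  MemLp.coeFn_toLp (hcirc.memLp_eval P)

theorem inner_toL2 (P Q : ℂ[X]) :
    ⟪hcirc.toL2 P, hcirc.toL2 Q⟫_ℂ = ∫ z, conj (P.eval z) * Q.eval z ∂μ := by
  rw [L2.inner_def]
  refine integral_congr_ae ?_
  filter_upwards [hcirc.toL2_ae_eq P, hcirc.toL2_ae_eq Q] with z hP hQ
  rw [hP, hQ, RCLike.inner_apply']

theorem norm_toL2_sq (P : ℂ[X]) : ‖hcirc.toL2 P‖ ^ 2 = ∫ z, ‖P.eval z‖ ^ 2 ∂μ := by
  have h := inner_self_eq_norm_sq_to_K (𝕜 := ℂ) (hcirc.toL2 P)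
  simp_rw [hcirc.inner_toL2, RCLike.conj_mul] at h
  exact_mod_cast h.symm

theorem norm_toL2 (P : ℂ[X]) : ‖hcirc.toL2 P‖ = l2norm μ P := by
  rw [l2norm, ← Real.sqrt_eq_rpow, ← hcirc.norm_toL2_sq, Real.sqrt_sq (norm_nonneg _)]

theorem norm_toL2_congr {P Q : ℂ[X]} (h : ∀ z : ℂ, ‖z‖ = 1 → ‖P.eval z‖ = ‖Q.eval z‖) :
    ‖hcirc.toL2 P‖ = ‖hcirc.toL2 Q‖ := by
  refine (sq_eq_sq₀ (norm_nonneg _) (norm_nonneg _)).1 ?_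
  rw [hcirc.norm_toL2_sq, hcirc.norm_toL2_sq]
  refine integral_congr_ae ?_
  filter_upwards [hcirc.ae_norm_eq_one] with z hz
  rw [h z hz]

theorem toL2_C_mul (c : ℂ) (P : ℂ[X]) : hcirc.toL2 (C c * P) = c • hcirc.toL2 P := by
  rw [← smul_eq_C_mul, map_smul]

theorem inner_toL2_X_mul (P Q : ℂ[X]) :
    ⟪hcirc.toL2 (X * P), hcirc.toL2 (X * Q)⟫_ℂ = ⟪hcirc.toL2 P, hcirc.toL2 Q⟫_ℂ := by
  rw [hcirc.inner_toL2, hcirc.inner_toL2]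
  refine integral_congr_ae ?_
  filter_upwards [hcirc.ae_norm_eq_one] with z hz
  have hzz : conj z * z = 1 := by rw [RCLike.conj_mul, hz]; norm_num
  simp only [eval_mul, eval_X, map_mul]
  linear_combination (conj (P.eval z) * Q.eval z) * hzz

theorem norm_toL2_X_mul (P : ℂ[X]) : ‖hcirc.toL2 (X * P)‖ = ‖hcirc.toL2 P‖ :=
  hcirc.norm_toL2_congr fun z hz => by rw [eval_mul, eval_X, norm_mul, hz, one_mul]

theorem inner_toL2_eq_zero_of_forall_X_pow {n : ℕ} {P Q : ℂ[X]} (hP : P.natDegree ≤ n)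
    (hQ : ∀ i ≤ n, ⟪hcirc.toL2 (X ^ i), hcirc.toL2 Q⟫_ℂ = 0) :
    ⟪hcirc.toL2 P, hcirc.toL2 Q⟫_ℂ = 0 := by
  rw [as_sum_range_C_mul_X_pow P, map_sum, sum_inner]
  refine Finset.sum_eq_zero fun i hi => ?_
  rw [hcirc.toL2_C_mul, inner_smul_left, hQ i (by grind), mul_zero]

theorem norm_toL2_derivative_X_mul_le (P : ℂ[X]) :
    ‖hcirc.toL2 (derivative (X * P))‖ ≤ ‖hcirc.toL2 P‖ + ‖hcirc.toL2 (derivative P)‖ := by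
  rw [derivative_mul, derivative_X, one_mul, map_add, ← hcirc.norm_toL2_X_mul (derivative P)]
  exact norm_add_le _ _

end OnCircle

theorem conj_verblunsky (φ : ℕ → ℂ[X]) (n : ℕ) :
    conj (verblunsky φ n) = -((φ (n + 1)).coeff 0 / (φ (n + 1)).leadingCoeff) := by
  rw [verblunsky, monicOP, map_neg, Complex.conj_conj, eval_mul, eval_C,
    ← coeff_zero_eq_eval_zero, inv_mul_eq_div]

def growthFactor (a : ℂ) : ℝ := (1 + ‖a‖) / √(1 - ‖a‖ ^ 2)

theorem growthFactor_zero : growthFactor 0 = 1 := by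
  simp [growthFactor]

theorem growthFactor_nonneg (a : ℂ) : 0 ≤ growthFactor a := by
  unfold growthFactor
  positivity

theorem tendsto_growthFactor : Tendsto growthFactor (𝓝 0) (𝓝 1) := by
  rw [← growthFactor_zero]
  refine ContinuousAt.tendsto ?_
  unfold growthFactor
  fun_prop (disch := simp)

def derivExcess (μ : Measure ℂ) (φ : ℕ → ℂ[X]) (n : ℕ) : ℝ :=
  l2norm μ (derivative (φ n)) - n + l2norm μ (derivative (starPoly n (φ n)))

namespace IsOPUC

variable {μ : Measure ℂ} {φ : ℕ → ℂ[X]} (hφ : IsOPUC μ φ)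
include hφ

theorem natDegree_eq (n : ℕ) : (φ n).natDegree = n :=
  natDegree_eq_of_degree_eq_some (hφ.deg n)

theorem leadingCoeff_ne_zero (n : ℕ) : (φ n).leadingCoeff ≠ 0 := fun h => by
  simpa [h] using hφ.lead_re_pos n

theorem conj_leadingCoeff (n : ℕ) : conj (φ n).leadingCoeff = (φ n).leadingCoeff :=
  Complex.conj_eq_iff_im.2 (hφ.lead_im_zero n)

theorem coeff_self (n : ℕ) : (φ n).coeff n = (φ n).leadingCoeff := by
  rw [leadingCoeff, hφ.natDegree_eq]

theorem degree_sub_C_mul_lt {n : ℕ} {P : ℂ[X]} (hP : P.degree ≤ n) :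
    (P - C (P.coeff n / (φ n).leadingCoeff) * φ n).degree < n := by
  rw [degree_lt_iff_coeff_zero]
  intro m hm
  rcases hm.eq_or_lt with rfl | hm
  · rw [coeff_sub, coeff_C_mul, hφ.coeff_self, div_mul_cancel₀ _ (hφ.leadingCoeff_ne_zero _),
      sub_self]
  · have hPm : P.coeff m = 0 := coeff_eq_zero_of_degree_lt (hP.trans_lt (by exact_mod_cast hm))
    have hφm : (φ n).coeff m = 0 := coeff_eq_zero_of_natDegree_lt (by rwa [hφ.natDegree_eq])
    rw [coeff_sub, coeff_C_mul, hPm, hφm, mul_zero, sub_zero]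

theorem exists_eq_sum_C_mul {n : ℕ} {P : ℂ[X]} (hP : P.degree < n) :
    ∃ c : ℕ → ℂ, P = ∑ j ∈ Finset.range n, C (c j) * φ j := by
  induction n generalizing P with
  | zero =>
    refine ⟨0, ?_⟩
    ext m
    simpa using (degree_lt_iff_coeff_zero P 0).1 hP m m.zero_le
  | succ n ih =>
    obtain ⟨c, hc⟩ := ih (hφ.degree_sub_C_mul_lt (Order.le_of_lt_succ hP))
    refine ⟨Function.update c n (P.coeff n / (φ n).leadingCoeff), ?_⟩
    rw [Finset.sum_range_succ, Function.update_self,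
      Finset.sum_congr rfl fun j hj => by
        rw [Function.update_of_ne (Finset.mem_range.1 hj).ne], ← hc, sub_add_cancel]

variable [IsFiniteMeasure μ] (hcirc : OnCircle μ)
include hcirc

theorem inner_toL2_eq_ite (m n : ℕ) :
    ⟪hcirc.toL2 (φ m), hcirc.toL2 (φ n)⟫_ℂ = if m = n then 1 else 0 := by
  rw [hcirc.inner_toL2]
  exact hφ.orth m n

theorem norm_toL2_eq_one (n : ℕ) : ‖hcirc.toL2 (φ n)‖ = 1 := by
  have h := inner_self_eq_norm_sq (𝕜 := ℂ) (hcirc.toL2 (φ n))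
  rw [hφ.inner_toL2_eq_ite hcirc, if_pos rfl, RCLike.one_re] at h
  exact (pow_eq_one_iff_of_nonneg (norm_nonneg _) two_ne_zero).1 h.symm

theorem inner_toL2_sum_C_mul (i : ℕ) (s : Finset ℕ) (c : ℕ → ℂ) :
    ⟪hcirc.toL2 (φ i), hcirc.toL2 (∑ j ∈ s, C (c j) * φ j)⟫_ℂ = if i ∈ s then c i else 0 := by
  simp_rw [map_sum, inner_sum, hcirc.toL2_C_mul, inner_smul_right, hφ.inner_toL2_eq_ite hcirc,
    mul_ite, mul_one, mul_zero]
  exact Finset.sum_ite_eq s i c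

theorem inner_toL2_eq_zero_of_degree_lt {m : ℕ} {P : ℂ[X]} (hP : P.degree < m) :
    ⟪hcirc.toL2 (φ m), hcirc.toL2 P⟫_ℂ = 0 := by
  obtain ⟨c, rfl⟩ := hφ.exists_eq_sum_C_mul hP
  rw [hφ.inner_toL2_sum_C_mul hcirc, if_neg (by simp)]

theorem inner_toL2_of_natDegree_le {n : ℕ} {P : ℂ[X]} (hP : P.natDegree ≤ n) :
    ⟪hcirc.toL2 (φ n), hcirc.toL2 P⟫_ℂ = P.coeff n / (φ n).leadingCoeff := by
  have h := hφ.inner_toL2_eq_zero_of_degree_lt hcirc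
    (hφ.degree_sub_C_mul_lt (degree_le_of_natDegree_le hP))
  rwa [map_sub, inner_sub_right, hcirc.toL2_C_mul, inner_smul_right,
    hφ.inner_toL2_eq_ite hcirc, if_pos rfl, mul_one, sub_eq_zero] at h

theorem eq_zero_of_forall_inner_toL2_eq_zero {n : ℕ} {P : ℂ[X]} (hP : P.degree < n)
    (h : ∀ j < n, ⟪hcirc.toL2 (φ j), hcirc.toL2 P⟫_ℂ = 0) : P = 0 := by
  obtain ⟨c, hc⟩ := hφ.exists_eq_sum_C_mul hP
  rw [hc]
  refine Finset.sum_eq_zero fun j hj => ?_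
  have hcj := h j (Finset.mem_range.1 hj)
  rw [hc, hφ.inner_toL2_sum_C_mul hcirc, if_pos hj] at hcj
  rw [hcj, C_0, zero_mul]

theorem inner_toL2_X_pow_starPoly {n j : ℕ} (hj : 1 ≤ j) (hjn : j ≤ n) :
    ⟪hcirc.toL2 (X ^ j), hcirc.toL2 (starPoly n (φ n))⟫_ℂ = 0 := by
  -- On the circle `conj (z ^ j) * φₙ*(z) = conj (conj (z ^ (n - j)) * φₙ(z))`.
  have hlow := hφ.inner_toL2_eq_zero_of_degree_lt hcirc (P := X ^ (n - j))
    (by rw [degree_X_pow]; exact_mod_cast (by omega : n - j < n))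
  rw [← inner_conj_symm, hcirc.inner_toL2] at hlow
  rw [hcirc.inner_toL2, ← Complex.conj_conj (∫ _, _ ∂μ), ← integral_conj, ← hlow]
  refine congrArg _ (integral_congr_ae ?_)
  filter_upwards [hcirc.ae_norm_eq_one] with z hz
  have hzz : (z * conj z) ^ j = 1 := by rw [RCLike.mul_conj, hz]; norm_num
  have hpow : conj z ^ n = conj z ^ j * conj z ^ (n - j) := by
    rw [← pow_add, Nat.add_sub_cancel' hjn]
  rw [eval_starPoly (hφ.natDegree_eq n).le hz]
  simp only [eval_pow, eval_X, map_mul, map_pow, Complex.conj_conj, hpow]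
  linear_combination (conj z ^ (n - j) * (φ n).eval z) * hzz

theorem eq_C_mul_starPoly_of_forall_inner_X_pow {n : ℕ} {Q : ℂ[X]} (hQ : Q.natDegree ≤ n)
    (hperp : ∀ j, 1 ≤ j → j ≤ n → ⟪hcirc.toL2 (X ^ j), hcirc.toL2 Q⟫_ℂ = 0) :
    Q = C (Q.coeff 0 / (φ n).leadingCoeff) * starPoly n (φ n) := by
  -- `D` vanishes at `0`, so `D = X * R` with `R ⟂ 1, X, …, X ^ (n - 1)`, which forces `R = 0`.
  set D := Q - C (Q.coeff 0 / (φ n).leadingCoeff) * starPoly n (φ n) with hD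
  have hDdeg : D.natDegree ≤ n := (natDegree_sub_le _ _).trans <| max_le hQ <|
    (natDegree_C_mul_le _ _).trans (natDegree_starPoly_le (hφ.natDegree_eq n).le)
  have hD0 : D.coeff 0 = 0 := by
    rw [hD, coeff_sub, coeff_C_mul, coeff_zero_starPoly, hφ.coeff_self, hφ.conj_leadingCoeff,
      div_mul_cancel₀ _ (hφ.leadingCoeff_ne_zero n), sub_self]
  obtain ⟨R, hR⟩ := X_dvd_iff.2 hD0
  have hRdeg : R.degree < n := by
    rw [degree_lt_iff_coeff_zero]
    intro m hm
    rw [← coeff_X_mul, ← hR]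
    exact coeff_eq_zero_of_natDegree_lt (by omega)
  have hRperp : ∀ i < n, ⟪hcirc.toL2 (X ^ i), hcirc.toL2 R⟫_ℂ = 0 := fun i hi => by
    rw [← hcirc.inner_toL2_X_mul, ← pow_succ', ← hR, hD, map_sub, inner_sub_right,
      hperp (i + 1) (by omega) hi, hcirc.toL2_C_mul, inner_smul_right,
      hφ.inner_toL2_X_pow_starPoly hcirc (by omega) hi, mul_zero, sub_zero]
  have hR0 : R = 0 := hφ.eq_zero_of_forall_inner_toL2_eq_zero hcirc hRdeg fun j hj =>
    hcirc.inner_toL2_eq_zero_of_forall_X_pow (hφ.natDegree_eq j).le fun i hi =>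
      hRperp i (by omega)
  rw [← sub_eq_zero, ← hD, hR, hR0, mul_zero]

theorem szego_recursion (n : ℕ) :
    C ((φ n).leadingCoeff / (φ (n + 1)).leadingCoeff) * φ (n + 1) =
      X * φ n - C (conj (verblunsky φ n)) * starPoly n (φ n) := by
  set r := (φ n).leadingCoeff / (φ (n + 1)).leadingCoeff with hr
  -- The leading terms cancel in `Q`, and `Q ⟂ X, …, X ^ n`: so `Q` is a multiple of `φₙ*`.
  set Q := C r * φ (n + 1) - X * φ n with hQ
  have hQdeg : Q.natDegree ≤ n := by
    rw [natDegree_le_iff_coeff_eq_zero]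
    intro m hm
    obtain ⟨k, rfl⟩ := Nat.exists_eq_add_of_le' (by omega : 1 ≤ m)
    rw [hQ, coeff_sub, coeff_C_mul, coeff_X_mul]
    rcases (Nat.le_of_lt_succ hm).eq_or_lt with rfl | hk
    · rw [hφ.coeff_self, hφ.coeff_self, hr, div_mul_cancel₀ _ (hφ.leadingCoeff_ne_zero _),
        sub_self]
    · rw [coeff_eq_zero_of_natDegree_lt (by rw [hφ.natDegree_eq]; omega),
        coeff_eq_zero_of_natDegree_lt (by rwa [hφ.natDegree_eq]), mul_zero, sub_self]
  have hperp : ∀ j, 1 ≤ j → j ≤ n → ⟪hcirc.toL2 (X ^ j), hcirc.toL2 Q⟫_ℂ = 0 := by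
    intro j hj hjn
    obtain ⟨i, rfl⟩ := Nat.exists_eq_add_of_le' hj
    have h1 : ⟪hcirc.toL2 (X ^ (i + 1)), hcirc.toL2 (φ (n + 1))⟫_ℂ = 0 :=
      inner_eq_zero_symm.1 <| hφ.inner_toL2_eq_zero_of_degree_lt hcirc <| by
        rw [degree_X_pow]; exact_mod_cast (by omega : i + 1 < n + 1)
    have h2 : ⟪hcirc.toL2 (X ^ (i + 1)), hcirc.toL2 (X * φ n)⟫_ℂ = 0 := by
      rw [pow_succ', hcirc.inner_toL2_X_mul]
      exact inner_eq_zero_symm.1 <| hφ.inner_toL2_eq_zero_of_degree_lt hcirc <| by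
        rw [degree_X_pow]; exact_mod_cast (by omega : i < n)
    rw [hQ, map_sub, inner_sub_right, hcirc.toL2_C_mul, inner_smul_right, h1, h2, mul_zero,
      sub_zero]
  have hQ0 : Q.coeff 0 / (φ n).leadingCoeff = -conj (verblunsky φ n) := by
    rw [conj_verblunsky, hQ, coeff_sub, coeff_C_mul, mul_coeff_zero, coeff_X_zero, zero_mul,
      sub_zero, hr]
    field_simp [hφ.leadingCoeff_ne_zero n, hφ.leadingCoeff_ne_zero (n + 1)]
  have h := hφ.eq_C_mul_starPoly_of_forall_inner_X_pow hcirc hQdeg hperp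
  rw [hQ0, hQ, C_neg, neg_mul, sub_eq_iff_eq_add] at h
  rw [h]
  ring

theorem norm_toL2_starPoly (n : ℕ) : ‖hcirc.toL2 (starPoly n (φ n))‖ = 1 := by
  rw [hcirc.norm_toL2_congr fun z hz => norm_eval_starPoly (hφ.natDegree_eq n).le hz,
    hφ.norm_toL2_eq_one hcirc]

theorem sq_norm_leadingCoeff_div (n : ℕ) :
    (‖(φ n).leadingCoeff‖ / ‖(φ (n + 1)).leadingCoeff‖) ^ 2 = 1 - ‖verblunsky φ n‖ ^ 2 := by
  set r := (φ n).leadingCoeff / (φ (n + 1)).leadingCoeff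
  have hX : hcirc.toL2 (X * φ n) = r • hcirc.toL2 (φ (n + 1)) +
      conj (verblunsky φ n) • hcirc.toL2 (starPoly n (φ n)) := by
    rw [← hcirc.toL2_C_mul, ← hcirc.toL2_C_mul, ← map_add, hφ.szego_recursion hcirc,
      sub_add_cancel]
  have horth : ⟪hcirc.toL2 (φ (n + 1)), hcirc.toL2 (starPoly n (φ n))⟫_ℂ = 0 :=
    hφ.inner_toL2_eq_zero_of_degree_lt hcirc <| degree_le_natDegree.trans_lt <| by
      exact_mod_cast (natDegree_starPoly_le (hφ.natDegree_eq n).le).trans_lt n.lt_succ_self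
  have h := norm_add_sq_eq_norm_sq_add_norm_sq_of_inner_eq_zero _ _
    (by rw [inner_smul_left, inner_smul_right, horth, mul_zero, mul_zero] :
      ⟪r • hcirc.toL2 (φ (n + 1)), conj (verblunsky φ n) • hcirc.toL2 (starPoly n (φ n))⟫_ℂ = 0)
  rw [← hX, hcirc.norm_toL2_X_mul, hφ.norm_toL2_eq_one hcirc, norm_smul, norm_smul,
    hφ.norm_toL2_eq_one hcirc, hφ.norm_toL2_starPoly hcirc, RCLike.norm_conj, norm_div] at h
  linear_combination -h

theorem norm_leadingCoeff_succ_div (n : ℕ) :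
    ‖(φ (n + 1)).leadingCoeff‖ / ‖(φ n).leadingCoeff‖ = (√(1 - ‖verblunsky φ n‖ ^ 2))⁻¹ := by
  rw [← hφ.sq_norm_leadingCoeff_div hcirc, Real.sqrt_sq (by positivity), inv_div]

theorem norm_leadingCoeff_le_succ (n : ℕ) :
    ‖(φ n).leadingCoeff‖ ≤ ‖(φ (n + 1)).leadingCoeff‖ := by
  have hpos : 0 < ‖(φ (n + 1)).leadingCoeff‖ := norm_pos_iff.2 (hφ.leadingCoeff_ne_zero _)
  have h := hφ.sq_norm_leadingCoeff_div hcirc n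
  rw [← div_le_one hpos, ← pow_le_one_iff_of_nonneg (by positivity) two_ne_zero, h]
  exact sub_le_self _ (sq_nonneg _)

theorem apply_succ_eq (n : ℕ) :
    φ (n + 1) = C ((φ (n + 1)).leadingCoeff / (φ n).leadingCoeff) *
      (X * φ n - C (conj (verblunsky φ n)) * starPoly n (φ n)) := by
  rw [← hφ.szego_recursion hcirc, ← mul_assoc, ← C_mul, div_mul_div_cancel₀', div_self, C_1,
    one_mul] <;> exact hφ.leadingCoeff_ne_zero _

theorem starPoly_apply_succ_eq (n : ℕ) :
    starPoly (n + 1) (φ (n + 1)) = C ((φ (n + 1)).leadingCoeff / (φ n).leadingCoeff) *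
      (starPoly n (φ n) - C (verblunsky φ n) * (X * φ n)) := by
  have hdeg := (hφ.natDegree_eq n).le
  conv_lhs => rw [hφ.apply_succ_eq hcirc n]
  rw [starPoly_C_mul, starPoly_sub, starPoly_X_mul hdeg, starPoly_C_mul, starPoly_starPoly hdeg,
    Complex.conj_conj, map_div₀, hφ.conj_leadingCoeff, hφ.conj_leadingCoeff]

theorem norm_toL2_derivative_succ_le (n : ℕ) :
    ‖hcirc.toL2 (derivative (φ (n + 1)))‖ ≤
      ‖(φ (n + 1)).leadingCoeff‖ / ‖(φ n).leadingCoeff‖ *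
        (1 + ‖hcirc.toL2 (derivative (φ n))‖ +
          ‖verblunsky φ n‖ * ‖hcirc.toL2 (derivative (starPoly n (φ n)))‖) := by
  have hX := hcirc.norm_toL2_derivative_X_mul_le (φ n)
  rw [hφ.norm_toL2_eq_one hcirc] at hX
  conv_lhs => rw [hφ.apply_succ_eq hcirc n]
  rw [derivative_C_mul, hcirc.toL2_C_mul, norm_smul, norm_div]
  gcongr
  rw [derivative_sub, derivative_C_mul, map_sub, hcirc.toL2_C_mul]
  refine (norm_sub_le _ _).trans ?_
  rw [norm_smul, RCLike.norm_conj]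
  gcongr

theorem norm_toL2_derivative_starPoly_succ_le (n : ℕ) :
    ‖hcirc.toL2 (derivative (starPoly (n + 1) (φ (n + 1))))‖ ≤
      ‖(φ (n + 1)).leadingCoeff‖ / ‖(φ n).leadingCoeff‖ *
        (‖hcirc.toL2 (derivative (starPoly n (φ n)))‖ +
          ‖verblunsky φ n‖ * (1 + ‖hcirc.toL2 (derivative (φ n))‖)) := by
  have hX := hcirc.norm_toL2_derivative_X_mul_le (φ n)
  rw [hφ.norm_toL2_eq_one hcirc] at hX
  rw [hφ.starPoly_apply_succ_eq hcirc n, derivative_C_mul, hcirc.toL2_C_mul, norm_smul,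
    norm_div]
  gcongr
  rw [derivative_sub, derivative_C_mul, map_sub, hcirc.toL2_C_mul]
  refine (norm_sub_le _ _).trans ?_
  rw [norm_smul]
  gcongr

theorem natCast_le_l2norm_derivative (n : ℕ) : (n : ℝ) ≤ l2norm μ (derivative (φ n)) := by
  rw [← hcirc.norm_toL2]
  cases n with
  | zero => simp
  | succ n =>
    -- Cauchy–Schwarz against `φ n`, which sees only the leading coefficient of `(φ (n + 1))'`.
    have hdeg : (derivative (φ (n + 1))).natDegree ≤ n :=
      (natDegree_derivative_le _).trans (by rw [hφ.natDegree_eq]; rfl)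
    have hinner : ⟪hcirc.toL2 (φ n), hcirc.toL2 (derivative (φ (n + 1)))⟫_ℂ =
        ((n + 1 : ℕ) : ℂ) * ((φ (n + 1)).leadingCoeff / (φ n).leadingCoeff) := by
      rw [hφ.inner_toL2_of_natDegree_le hcirc hdeg, coeff_derivative, hφ.coeff_self]
      push_cast
      ring
    have hratio : 1 ≤ ‖(φ (n + 1)).leadingCoeff‖ / ‖(φ n).leadingCoeff‖ :=
      (one_le_div (norm_pos_iff.2 (hφ.leadingCoeff_ne_zero n))).2
        (hφ.norm_leadingCoeff_le_succ hcirc n)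
    calc ((n + 1 : ℕ) : ℝ)
        ≤ (n + 1 : ℕ) * (‖(φ (n + 1)).leadingCoeff‖ / ‖(φ n).leadingCoeff‖) :=
          le_mul_of_one_le_right (by positivity) hratio
      _ = ‖⟪hcirc.toL2 (φ n), hcirc.toL2 (derivative (φ (n + 1)))⟫_ℂ‖ := by
          rw [hinner, norm_mul, norm_div, Complex.norm_natCast]
      _ ≤ ‖hcirc.toL2 (derivative (φ (n + 1)))‖ := by
          simpa [hφ.norm_toL2_eq_one hcirc] using
            norm_inner_le_norm (𝕜 := ℂ) (hcirc.toL2 (φ n)) (hcirc.toL2 (derivative (φ (n + 1))))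

theorem derivExcess_nonneg (n : ℕ) : 0 ≤ derivExcess μ φ n := by
  rw [derivExcess]
  linarith [hφ.natCast_le_l2norm_derivative hcirc n,
    l2norm_nonneg μ (derivative (starPoly n (φ n)))]

theorem derivExcess_succ_le (n : ℕ) :
    derivExcess μ φ (n + 1) ≤ growthFactor (verblunsky φ n) * derivExcess μ φ n +
      (growthFactor (verblunsky φ n) - 1) * (n + 1) := by
  have hF := hφ.norm_toL2_derivative_succ_le hcirc n
  have hG := hφ.norm_toL2_derivative_starPoly_succ_le hcirc n
  have hγ : growthFactor (verblunsky φ n) =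
      ‖(φ (n + 1)).leadingCoeff‖ / ‖(φ n).leadingCoeff‖ * (1 + ‖verblunsky φ n‖) := by
    rw [hφ.norm_leadingCoeff_succ_div hcirc, growthFactor, div_eq_inv_mul]
  simp only [hcirc.norm_toL2] at hF hG
  rw [derivExcess, derivExcess, hγ]
  push_cast
  linear_combination hF + hG

end IsOPUC

theorem stmt10_general (N : ℕ → ℕ) (hN0 : 0 < N 0) (hNmono : StrictMono N)
    (hratio : Filter.limsup (fun k : ℕ => (N k : ℝ) / N (k + 1)) atTop < 1)
    (β : ℕ → ℂ) (hβ0 : Tendsto β atTop (𝓝 0))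
    (μ : Measure ℂ) [IsProbabilityMeasure μ] (hcirc : OnCircle μ)
    (φ : ℕ → Polynomial ℂ) (hφ : IsOPUC μ φ)
    (hα1 : ∀ k : ℕ, verblunsky φ (N k - 1) = β k)
    (hα2 : ∀ j : ℕ, (∀ k : ℕ, j ≠ N k - 1) → verblunsky φ j = 0) :
    NormalBehavior μ φ := by
  have hexcess : Tendsto (fun n : ℕ => derivExcess μ φ n / n) atTop (𝓝 0) :=
    tendsto_div_of_sparse_growth hN0 hNmono hratio (hφ.derivExcess_nonneg hcirc)
      (fun n => growthFactor_nonneg _) (fun n hn => by rw [hα2 n hn, growthFactor_zero])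
      (by simpa only [Function.comp_def, hα1] using tendsto_growthFactor.comp hβ0)
      (hφ.derivExcess_succ_le hcirc)
  have hdefect : Tendsto (fun n : ℕ => (l2norm μ (derivative (φ n)) - n) / n) atTop (𝓝 0) :=
    squeeze_zero
      (fun n => div_nonneg (sub_nonneg.2 (hφ.natCast_le_l2norm_derivative hcirc n)) n.cast_nonneg)
      (fun n => div_le_div_of_nonneg_right
        (by rw [derivExcess]; linarith [l2norm_nonneg μ (derivative (starPoly n (φ n)))])
        n.cast_nonneg)
      hexcess
  have h := hdefect.const_add 1
  rw [add_zero] at h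
  refine h.congr' ?_
  filter_upwards [eventually_ne_atTop 0] with n hn
  rw [one_add_div (Nat.cast_ne_zero.2 hn), add_sub_cancel]

/-- **sparse Verblunsky coefficients.** If `limsup N_k/N_{k+1} < 1`,
`β_k ∈ 𝔻`, `β_k → 0`, and the Verblunsky coefficients of `μ` are the associated
sparse sequence, then `μ` has normal derivative behavior. -/
theorem stmt10 (N : ℕ → ℕ) (hN0 : 0 < N 0) (hNmono : StrictMono N)
    (hratio : Filter.limsup (fun k : ℕ => (N k : ℝ) / N (k + 1)) atTop < 1)
    (β : ℕ → ℂ) (hβ : ∀ k, ‖β k‖ < 1) (hβ0 : Tendsto β atTop (𝓝 0))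
    (μ : Measure ℂ) [IsProbabilityMeasure μ] (hcirc : OnCircle μ)
    (hnt : NontrivialSupport μ) (φ : ℕ → Polynomial ℂ) (hφ : IsOPUC μ φ)
    (hα1 : ∀ k : ℕ, verblunsky φ (N k - 1) = β k)
    (hα2 : ∀ j : ℕ, (∀ k : ℕ, j ≠ N k - 1) → verblunsky φ j = 0) :
    NormalBehavior μ φ :=
  stmt10_general N hN0 hNmono hratio β hβ0 μ hcirc φ hφ hα1 hα2
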